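/- arXiv:1509.07278 — 2 statements merged into one kernel-verified Lean document; each statement's English description precedes it below -/
import Mathlib

section
/- Let Q = (q_1, …, q_k) be a list of sequences of labeled bins with m distinct pallet labels. Call a configuration (i_1, …, i_k) a decision configuration if for every j with i_j < |q_j| the pallet label of the bin at position i_j + 1 in q_j is not open in (i_1, …, i_k). Then the number of decision configurations of Q is at most (m + 2)^k; indeed, in every decision configuration, for each j either i_j = 0, or i_j = |q_j|, or i_j + 1 = first(q_j, t) for some pallet t. -/
/-- A pallet `t` is open in configuration `c`: some bin labeled `t` has already been
removed (0-based index `< c j` in some sequence) and some bin labeled `t` remains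
(0-based index `≥ c l` in some sequence). -/
def OpenPallet {k : ℕ} {P : Type} (Q : Fin k → List P) (c : Fin k → ℕ) (t : P) : Prop :=
  (∃ j, ∃ i, i < c j ∧ (Q j)[i]? = some t) ∧
  (∃ l, ∃ i, c l ≤ i ∧ (Q l)[i]? = some t)

/-- A configuration of the instance `Q`. -/
def IsConfig {k : ℕ} {P : Type} (Q : Fin k → List P) (c : Fin k → ℕ) : Prop :=
  ∀ j, c j ≤ (Q j).length

/-- The number of open pallets in configuration `c`. -/
noncomputable def numOpen {k : ℕ} {P : Type} (Q : Fin k → List P) (c : Fin k → ℕ) : ℕ :=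
  {t | OpenPallet Q c t}.ncard

/-- A processing of `Q`: a sequence of configurations from `(0,…,0)` to
`(|q_1|,…,|q_k|)`, each step increasing exactly one coordinate by one. -/
def IsProcessing {k : ℕ} {P : Type} (Q : Fin k → List P) (n : ℕ) (f : ℕ → Fin k → ℕ) : Prop :=
  (∀ i, i ≤ n → IsConfig Q (f i)) ∧
  (∀ j, f 0 j = 0) ∧
  (∀ j, f n j = (Q j).length) ∧
  (∀ i, i < n → ∃ j, f (i + 1) j = f i j + 1 ∧ ∀ j', j' ≠ j → f (i + 1) j' = f i j')

/-- `Q` can be processed with at most `p` stack-up places. -/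
def CanProcess {k : ℕ} {P : Type} (Q : Fin k → List P) (p : ℕ) : Prop :=
  ∃ n f, IsProcessing Q n f ∧ ∀ i, i ≤ n → numOpen Q (f i) ≤ p

/-- Pallet `t` occurs in `Q`. -/
def occursIn {k : ℕ} {P : Type} (Q : Fin k → List P) (t : P) : Prop :=
  ∃ j, t ∈ Q j

/-- The arc relation of the sequence graph `G_Q`. -/
def seqArc {k : ℕ} {P : Type} (Q : Fin k → List P) (u v : P) : Prop :=
  u ≠ v ∧ ∃ j, ∃ i1 i2 : ℕ, i1 < i2 ∧ (Q j)[i1]? = some u ∧ (Q j)[i2]? = some v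

/-- `first(q, t)`: the 1-indexed position of the first bin labeled `t` in `q`,
and `|q| + 1` if no bin labeled `t` occurs in `q`. -/
def firstPos {P : Type} [DecidableEq P] (q : List P) (t : P) : ℕ :=
  q.idxOf t + 1

/-- A decision configuration: for every sequence, the pallet of the next bin
(if any) is not open. -/
def IsDecision {k : ℕ} {P : Type} (Q : Fin k → List P) (c : Fin k → ℕ) : Prop :=
  ∀ j, ∀ t : P, (Q j)[c j]? = some t → ¬ OpenPallet Q c t


lemma indexOf_le_of_getElem? {P : Type} [DecidableEq P] {l : List P} {t : P} {i : ℕ}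
    (h : l[i]? = some t) : l.idxOf t ≤ i := by
  rw [List.getElem?_eq_some_iff] at h
  obtain ⟨hi, he⟩ := h
  by_contra hlt
  push_neg at hlt
  have := List.not_of_lt_findIdx (p := (· == t)) (xs := l) (i := i) hlt
  simp [he] at this

lemma decision_coord {P : Type} [DecidableEq P] {k : ℕ} (Q : Fin k → List P)
    (c : Fin k → ℕ) (hc : IsConfig Q c) (hd : IsDecision Q c) (j : Fin k) :
    c j = 0 ∨ c j = (Q j).length ∨ ∃ t, t ∈ Q j ∧ (Q j).idxOf t = c j := by
  rcases eq_or_lt_of_le (hc j) with hlen | hlt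
  · exact Or.inr (Or.inl hlen)
  rcases Nat.eq_zero_or_pos (c j) with h0 | hpos
  · exact Or.inl h0
  set t := (Q j)[c j]'hlt with ht
  have hget : (Q j)[c j]? = some t := List.getElem?_eq_some_iff.mpr ⟨hlt, rfl⟩
  refine Or.inr (Or.inr ⟨t, List.getElem_mem hlt, ?_⟩)
  have hle : (Q j).idxOf t ≤ c j := indexOf_le_of_getElem? hget
  rcases eq_or_lt_of_le hle with h | h
  · exact h
  · exfalso
    apply hd j t hget
    refine ⟨⟨j, (Q j).idxOf t, h, ?_⟩, ⟨j, c j, le_refl _, hget⟩⟩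
    exact List.getElem?_eq_some_iff.mpr ⟨lt_trans h hlt, List.getElem_idxOf _⟩

/-- The number of decision configurations of `Q` is at most `(m + 2)^k`; indeed, in
every decision configuration each coordinate `i_j` is `0`, or `|q_j|`, or satisfies
`i_j + 1 = first(q_j, t)` for some pallet `t`. -/
theorem stmt8 {P : Type} [DecidableEq P] {k : ℕ} (Q : Fin k → List P) :
    {c : Fin k → ℕ | IsConfig Q c ∧ IsDecision Q c}.ncard ≤
        ({t : P | occursIn Q t}.ncard + 2) ^ k ∧
      ∀ c : Fin k → ℕ, IsConfig Q c → IsDecision Q c → ∀ j : Fin k,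
        c j = 0 ∨ c j = (Q j).length ∨ ∃ t : P, c j + 1 = firstPos (Q j) t := by
  constructor
  · set T : Finset P := Finset.univ.biUnion (fun j => (Q j).toFinset) with hT
    have hTset : {t : P | occursIn Q t} = ↑T := by
      ext t; simp [hT, occursIn]
    set A : Fin k → Finset ℕ :=
      fun j => insert 0 (insert (Q j).length (T.image fun t => (Q j).idxOf t)) with hA
    have hsub : {c : Fin k → ℕ | IsConfig Q c ∧ IsDecision Q c} ⊆ ↑(Fintype.piFinset A) := by
      rintro c ⟨hc, hd⟩
      simp only [Finset.coe_sort_coe, Finset.mem_coe, Fintype.mem_piFinset]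
      intro j
      rcases decision_coord Q c hc hd j with h | h | ⟨t, htm, hti⟩
      · simp [hA, h]
      · simp [hA, h]
      · simp only [hA, Finset.mem_insert, Finset.mem_image]
        refine Or.inr (Or.inr ⟨t, ?_, hti⟩)
        simp [hT]
        exact ⟨j, htm⟩
    calc {c : Fin k → ℕ | IsConfig Q c ∧ IsDecision Q c}.ncard
        ≤ (↑(Fintype.piFinset A) : Set (Fin k → ℕ)).ncard :=
          Set.ncard_le_ncard hsub (Fintype.piFinset A).finite_toSet
      _ = (Fintype.piFinset A).card := Set.ncard_coe_finset _
      _ = ∏ j, (A j).card := Fintype.card_piFinset A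
      _ ≤ ∏ _j : Fin k, (T.card + 2) := by
          apply Finset.prod_le_prod
          · intro i _; exact Nat.zero_le _
          · intro i _
            calc (A i).card ≤ (insert (Q i).length (T.image fun t => (Q i).idxOf t)).card + 1 :=
                  Finset.card_insert_le _ _
              _ ≤ ((T.image fun t => (Q i).idxOf t).card + 1) + 1 :=
                  Nat.add_le_add_right (Finset.card_insert_le _ _) 1
              _ ≤ (T.card + 1) + 1 := Nat.add_le_add_right (Nat.add_le_add_right Finset.card_image_le 1) 1
              _ = T.card + 2 := rfl
      _ = (T.card + 2) ^ k := by simp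
      _ = ({t : P | occursIn Q t}.ncard + 2) ^ k := by rw [hTset, Set.ncard_coe_finset]
  · intro c hc hd j
    rcases decision_coord Q c hc hd j with h | h | ⟨t, _, hti⟩
    · exact Or.inl h
    · exact Or.inr (Or.inl h)
    · exact Or.inr (Or.inr ⟨t, by rw [firstPos, hti]⟩)
end

section
/- Let Q = (q_1, …, q_k) be a list of sequences of labeled bins such that every pallet label occurs in only one of the sequences (d_Q = 1), and let p be a positive integer. Then Q can be processed with at most p stack-up places if and only if for every j ∈ {1, …, k} and every c with 1 ≤ c ≤ |q_j|, the number of pallets t with first(q_j, t) ≤ c and last(q_j, t) > c is at most p. In particular, when d_Q = 1 the sequences can be processed one after the other without increasing the number of needed stack-up places. -/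
/-- `last(q, t)`: the 1-indexed position of the last bin labeled `t` in `q`,
and `0` if no bin labeled `t` occurs in `q`. -/
def lastPos {P : Type} [DecidableEq P] (q : List P) (t : P) : ℕ :=
  q.length - q.reverse.idxOf t

set_option linter.unusedSectionVars false

section Aux
variable {P : Type} [DecidableEq P]

lemma aux_indexOf_le {q : List P} {t : P} {i : ℕ} (h : i < q.length) (ht : q[i] = t) :
    q.idxOf t ≤ i := by
  induction q generalizing i with
  | nil => simp at h
  | cons a l ih =>
    cases i with
    | zero =>
      simp only [List.getElem_cons_zero] at ht
      subst ht
      simp [List.idxOf_cons]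
    | succ m =>
      rw [List.idxOf_cons]
      rcases eq_or_ne a t with rfl | hne
      · simp
      · have := ih (by simpa using h) (by simpa using ht)
        rw [beq_eq_false_iff_ne.mpr hne, cond_false]
        omega

lemma aux_exists_lt_iff {q : List P} {t : P} {c : ℕ} (hc : c ≤ q.length) :
    (∃ i, i < c ∧ q[i]? = some t) ↔ q.idxOf t < c := by
  constructor
  · rintro ⟨i, hi, hq⟩
    obtain ⟨hlt, heq⟩ := List.getElem?_eq_some_iff.mp hq
    exact lt_of_le_of_lt (aux_indexOf_le hlt heq) hi
  · intro h
    have hm : t ∈ q := List.idxOf_lt_length_iff.mp (lt_of_lt_of_le h hc)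
    exact ⟨q.idxOf t, h, List.getElem?_idxOf hm⟩

lemma aux_exists_ge_iff {q : List P} {t : P} {c : ℕ} :
    (∃ i, c ≤ i ∧ q[i]? = some t) ↔ c < q.length - q.reverse.idxOf t := by
  constructor
  · rintro ⟨i, hi, hq⟩
    obtain ⟨hlt, heq⟩ := List.getElem?_eq_some_iff.mp hq
    have h1 : q.length - 1 - i < q.reverse.length := by simp; omega
    have h2 : q.reverse[q.length - 1 - i] = t := by
      rw [List.getElem_reverse]
      have : q.length - 1 - (q.length - 1 - i) = i := by omega
      simp_rw [this]; exact heq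
    have := aux_indexOf_le h1 h2
    omega
  · intro h
    have hr : q.reverse.idxOf t < q.reverse.length := by simp; omega
    have heq : q.reverse[q.reverse.idxOf t] = t := List.getElem_idxOf hr
    rw [List.getElem_reverse] at heq
    refine ⟨q.length - 1 - q.reverse.idxOf t, by omega, ?_⟩
    rw [List.getElem?_eq_getElem (by omega)]
    exact congrArg some heq

end Aux

section Aux2
variable {P : Type} [DecidableEq P]

lemma aux_cut_iff {q : List P} {t : P} {c : ℕ} (hc : c ≤ q.length) :
    (firstPos q t ≤ c ∧ c < lastPos q t) ↔
      ((∃ i, i < c ∧ q[i]? = some t) ∧ (∃ i, c ≤ i ∧ q[i]? = some t)) := by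
  rw [aux_exists_lt_iff hc, aux_exists_ge_iff]
  unfold firstPos lastPos
  omega

lemma aux_mem_of_getElem? {q : List P} {t : P} {i : ℕ} (h : q[i]? = some t) : t ∈ q := by
  obtain ⟨hlt, heq⟩ := List.getElem?_eq_some_iff.mp h
  exact heq ▸ List.getElem_mem hlt

lemma aux_cut_finite (q : List P) (c : ℕ) :
    {t : P | firstPos q t ≤ c ∧ c < lastPos q t}.Finite := by
  apply Set.Finite.subset (List.finite_toSet q)
  rintro t ⟨-, h2⟩
  unfold lastPos at h2
  have : q.reverse.idxOf t < q.reverse.length := by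
    rw [List.length_reverse]; omega
  exact List.mem_reverse.mp (List.idxOf_lt_length_iff.mp this)

lemma aux_open_finite {k : ℕ} (Q : Fin k → List P) (c : Fin k → ℕ) :
    {t : P | OpenPallet Q c t}.Finite := by
  apply Set.Finite.subset (Set.finite_iUnion (fun j : Fin k => List.finite_toSet (Q j)))
  rintro t ⟨⟨j, i, _, hq⟩, -⟩
  exact Set.mem_iUnion.mpr ⟨j, aux_mem_of_getElem? hq⟩

lemma aux_ivt {g : ℕ → ℕ} {c : ℕ} : ∀ {n : ℕ}, g 0 ≤ c → c ≤ g n →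
    (∀ i, i < n → g (i+1) ≤ g i + 1) → ∃ i, i ≤ n ∧ g i = c := by
  intro n
  induction n with
  | zero => intro h0 hn _; exact ⟨0, le_rfl, by omega⟩
  | succ m ih =>
    intro h0 hn hstep
    by_cases hc : c ≤ g m
    · obtain ⟨i, hi, hgi⟩ := ih h0 hc (fun i hi => hstep i (by omega))
      exact ⟨i, by omega, hgi⟩
    · have := hstep m (by omega)
      exact ⟨m + 1, le_rfl, by omega⟩

lemma aux_seg {g : ℕ → ℕ} (h0 : g 0 = 0) :
    ∀ {N i : ℕ}, i < g N → ∃ m, m < N ∧ g m ≤ i ∧ i < g (m + 1) := by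
  intro N
  induction N with
  | zero => intro i hi; omega
  | succ M ih =>
    intro i hi
    by_cases hm : g M ≤ i
    · exact ⟨M, by omega, hm, hi⟩
    · obtain ⟨m, h1, h2, h3⟩ := ih (show i < g M by omega)
      exact ⟨m, by omega, h2, h3⟩

end Aux2

/-- If every pallet label of `Q` occurs in only one sequence (`d_Q = 1`), then `Q` can
be processed with at most `p` stack-up places iff within each single sequence every cut
`c ∈ {1,…,|q_j|}` is crossed by at most `p` pallets: the sequences can be processed one
after the other. -/
theorem stmt9 {P : Type} [DecidableEq P] {k : ℕ} (Q : Fin k → List P)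
    (hd : ∀ t : P, ∀ j l : Fin k, t ∈ Q j → t ∈ Q l → j = l)
    (p : ℕ) (hp : 1 ≤ p) :
    CanProcess Q p ↔
      ∀ j : Fin k, ∀ c : ℕ, 1 ≤ c → c ≤ (Q j).length →
        {t : P | firstPos (Q j) t ≤ c ∧ c < lastPos (Q j) t}.ncard ≤ p := by
  constructor
  · rintro ⟨n, f, ⟨hcfg, h0, hn, hstep⟩, hbound⟩ j c hc1 hc2
    have hmono : ∀ i, i < n → f (i+1) j ≤ f i j + 1 := by
      intro i hi
      obtain ⟨j₀, hj₀, hother⟩ := hstep i hi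
      by_cases hj : j = j₀
      · subst hj; omega
      · rw [hother j hj]; omega
    obtain ⟨i, hin, hfi⟩ := aux_ivt (g := fun i => f i j)
      (by simp [h0 j]) (by simpa [hn j] using hc2) hmono
    have hfi' : f i j = c := hfi
    have hsub : {t : P | firstPos (Q j) t ≤ c ∧ c < lastPos (Q j) t} ⊆
        {t | OpenPallet Q (f i) t} := by
      intro t ht
      obtain ⟨⟨i1, hi1, e1⟩, ⟨i2, hi2, e2⟩⟩ := (aux_cut_iff hc2).mp ht
      exact ⟨⟨j, i1, by omega, e1⟩, ⟨j, i2, by omega, e2⟩⟩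
    have heq : numOpen Q (f i) = {t | OpenPallet Q (f i) t}.ncard := rfl
    calc {t : P | firstPos (Q j) t ≤ c ∧ c < lastPos (Q j) t}.ncard
        ≤ {t | OpenPallet Q (f i) t}.ncard :=
          Set.ncard_le_ncard hsub (aux_open_finite Q (f i))
      _ = numOpen Q (f i) := heq.symm
      _ ≤ p := hbound i hin
  · intro h
    classical
    set len' : ℕ → ℕ := fun m => if hm : m < k then (Q ⟨m, hm⟩).length else 0 with hlen'
    set g : ℕ → ℕ := fun m => ∑ l ∈ Finset.range m, len' l with hgdef
    have hg0 : g 0 = 0 := by simp [hgdef]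
    have hgsucc : ∀ m, g (m+1) = g m + len' m := fun m => Finset.sum_range_succ _ m
    have hgmono : ∀ a b : ℕ, a ≤ b → g a ≤ g b := by
      intro a b hab
      exact Finset.sum_le_sum_of_subset (Finset.range_subset_range.mpr hab)
    have hlenj : ∀ j : Fin k, len' j.1 = (Q j).length := by
      intro j; simp [hlen', j.2]
    set F : ℕ → Fin k → ℕ := fun i j => min (Q j).length (i - g j.1) with hF
    have key : ∀ i t, OpenPallet Q (F i) t →
        ∃ j : Fin k, g j.1 < i ∧ i < g (j.1 + 1) ∧
          (firstPos (Q j) t ≤ F i j ∧ F i j < lastPos (Q j) t) := by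
      rintro i t ⟨⟨j, i1, hi1, e1⟩, ⟨l, i2, hi2, e2⟩⟩
      have hjl : j = l := hd t j l (aux_mem_of_getElem? e1) (aux_mem_of_getElem? e2)
      subst hjl
      have hlen2 : i2 < (Q j).length := (List.getElem?_eq_some_iff.mp e2).1
      have hFi : F i j = min (Q j).length (i - g j.1) := rfl
      have h2 := hgsucc j.1
      rw [hlenj j] at h2
      refine ⟨j, by omega, by omega, ?_⟩
      exact (aux_cut_iff (by omega)).mpr ⟨⟨i1, hi1, e1⟩, ⟨i2, hi2, e2⟩⟩
    refine ⟨g k, F, ⟨?_, ?_, ?_, ?_⟩, ?_⟩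
    · intro i _ j
      exact min_le_left _ _
    · intro j
      show min (Q j).length (0 - g j.1) = 0
      omega
    · intro j
      show min (Q j).length (g k - g j.1) = (Q j).length
      have h1 : g (j.1 + 1) ≤ g k := hgmono _ _ j.2
      have h2 := hgsucc j.1
      rw [hlenj j] at h2
      omega
    · intro i hi
      obtain ⟨m, hmk, hgm, hgm1⟩ := aux_seg hg0 hi
      refine ⟨⟨m, hmk⟩, ?_, ?_⟩
      · show min (Q ⟨m, hmk⟩).length (i + 1 - g m) = min (Q ⟨m, hmk⟩).length (i - g m) + 1
        have h2 := hgsucc m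
        rw [hlenj ⟨m, hmk⟩] at h2
        omega
      · intro j' hj'
        show min (Q j').length (i + 1 - g j'.1) = min (Q j').length (i - g j'.1)
        have hne : j'.1 ≠ m := fun hh => hj' (Fin.ext hh)
        rcases lt_or_gt_of_ne hne with hlt | hgt
        · have h1 : g (j'.1 + 1) ≤ g m := hgmono _ _ hlt
          have h2 := hgsucc j'.1
          rw [hlenj j'] at h2
          omega
        · have h1 : g (m + 1) ≤ g j'.1 := hgmono _ _ hgt
          omega
    · intro i hin
      have heq : numOpen Q (F i) = {t | OpenPallet Q (F i) t}.ncard := rfl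
      by_cases hex : ∃ t, OpenPallet Q (F i) t
      · obtain ⟨t₀, ht₀⟩ := hex
        obtain ⟨j₀, hj₀1, hj₀2, -⟩ := key i t₀ ht₀
        have huniq : ∀ j : Fin k, g j.1 < i → i < g (j.1 + 1) → j = j₀ := by
          intro j hA hB
          rcases lt_trichotomy j.1 j₀.1 with hlt | heq' | hgt
          · have := hgmono _ _ (show j.1 + 1 ≤ j₀.1 from hlt); omega
          · exact Fin.ext heq'
          · have := hgmono _ _ (show j₀.1 + 1 ≤ j.1 from hgt); omega
        have hsub : {t | OpenPallet Q (F i) t} ⊆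
            {t : P | firstPos (Q j₀) t ≤ F i j₀ ∧ F i j₀ < lastPos (Q j₀) t} := by
          intro t ht
          obtain ⟨j, h1, h2, h3⟩ := key i t ht
          rw [huniq j h1 h2] at h3
          exact h3
        have h2' := hgsucc j₀.1
        rw [hlenj j₀] at h2'
        have hFj : F i j₀ = min (Q j₀).length (i - g j₀.1) := rfl
        have hc1' : 1 ≤ F i j₀ := by omega
        have hc2' : F i j₀ ≤ (Q j₀).length := min_le_left _ _
        calc numOpen Q (F i) = {t | OpenPallet Q (F i) t}.ncard := heq
          _ ≤ {t : P | firstPos (Q j₀) t ≤ F i j₀ ∧ F i j₀ < lastPos (Q j₀) t}.ncard :=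
              Set.ncard_le_ncard hsub (aux_cut_finite _ _)
          _ ≤ p := h j₀ (F i j₀) hc1' hc2'
      · push_neg at hex
        have hempty : {t | OpenPallet Q (F i) t} = ∅ := by
          ext t; simp [hex t]
        rw [heq, hempty, Set.ncard_empty]
        omega
end
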